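/- arXiv:1710.11478 — 5 statements merged into one kernel-verified Lean document; each statement's English description precedes it below -/
import Mathlib

section
/- Let B, S, C be entrywise nonnegative, let σ > 0, δ > 0, and set B⁺ = U_B(B; δ). Then G_B(B⁺, B; δ) ≤ G_B(B, B; δ) = J(B, S, C), and equality holds if and only if B satisfies the B-part KKT conditions. (Paper's theorem20.) -/
open Matrix Classical Filter

noncomputable section

/-- Squared Frobenius norm. -/
def frobSq {m n : ℕ} (X : Matrix (Fin m) (Fin n) ℝ) : ℝ := ∑ i, ∑ j, (X i j) ^ 2

/-- The BNMtF objective J(B,S,C). -/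
def objJ {M N P : ℕ} (A : Matrix (Fin M) (Fin N) ℝ) (α β : ℝ)
    (B : Matrix (Fin M) (Fin P) ℝ) (S : Matrix (Fin P) (Fin P) ℝ) (C : Matrix (Fin P) (Fin N) ℝ) : ℝ :=
  (1 / 2) * frobSq (A - B * S * C) + (α / 2) * frobSq (C * Cᵀ - 1) +
    (β / 2) * frobSq (Bᵀ * B - 1)

/-- ∇_B J. -/
def gradB {M N P : ℕ} (A : Matrix (Fin M) (Fin N) ℝ) (β : ℝ)
    (B : Matrix (Fin M) (Fin P) ℝ) (S : Matrix (Fin P) (Fin P) ℝ) (C : Matrix (Fin P) (Fin N) ℝ) : Matrix (Fin M) (Fin P) ℝ :=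
  B * S * C * Cᵀ * Sᵀ - A * Cᵀ * Sᵀ + β • (B * Bᵀ * B) - β • B

/-- ∇_C J. -/
def gradC {M N P : ℕ} (A : Matrix (Fin M) (Fin N) ℝ) (α : ℝ)
    (B : Matrix (Fin M) (Fin P) ℝ) (S : Matrix (Fin P) (Fin P) ℝ) (C : Matrix (Fin P) (Fin N) ℝ) : Matrix (Fin P) (Fin N) ℝ :=
  Sᵀ * Bᵀ * B * S * C - Sᵀ * Bᵀ * A + α • (C * Cᵀ * C) - α • C

/-- ∇_S J. -/
def gradS {M N P : ℕ} (A : Matrix (Fin M) (Fin N) ℝ)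
    (B : Matrix (Fin M) (Fin P) ℝ) (S : Matrix (Fin P) (Fin P) ℝ) (C : Matrix (Fin P) (Fin N) ℝ) : Matrix (Fin P) (Fin P) ℝ :=
  Bᵀ * B * S * C * Cᵀ - Bᵀ * A * Cᵀ

/-- B-part KKT conditions. -/
def KKTB {M N P : ℕ} (A : Matrix (Fin M) (Fin N) ℝ) (β : ℝ)
    (B : Matrix (Fin M) (Fin P) ℝ) (S : Matrix (Fin P) (Fin P) ℝ) (C : Matrix (Fin P) (Fin N) ℝ) : Prop :=
  ∀ m p, 0 ≤ gradB A β B S C m p ∧ gradB A β B S C m p * B m p = 0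

/-- C-part KKT conditions. -/
def KKTC {M N P : ℕ} (A : Matrix (Fin M) (Fin N) ℝ) (α : ℝ)
    (B : Matrix (Fin M) (Fin P) ℝ) (S : Matrix (Fin P) (Fin P) ℝ) (C : Matrix (Fin P) (Fin N) ℝ) : Prop :=
  ∀ q n, 0 ≤ gradC A α B S C q n ∧ gradC A α B S C q n * C q n = 0

/-- S-part KKT conditions. -/
def KKTS {M N P : ℕ} (A : Matrix (Fin M) (Fin N) ℝ)
    (B : Matrix (Fin M) (Fin P) ℝ) (S : Matrix (Fin P) (Fin P) ℝ) (C : Matrix (Fin P) (Fin N) ℝ) : Prop :=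
  ∀ p q, 0 ≤ gradS A B S C p q ∧ gradS A B S C p q * S p q = 0

/-- Full KKT conditions. -/
def KKT {M N P : ℕ} (A : Matrix (Fin M) (Fin N) ℝ) (α β : ℝ)
    (B : Matrix (Fin M) (Fin P) ℝ) (S : Matrix (Fin P) (Fin P) ℝ) (C : Matrix (Fin P) (Fin N) ℝ) : Prop :=
  KKTB A β B S C ∧ KKTS A B S C ∧ KKTC A α B S C

/-- B̄. -/
def Bbar {M N P : ℕ} (A : Matrix (Fin M) (Fin N) ℝ) (β σ : ℝ)
    (B : Matrix (Fin M) (Fin P) ℝ) (S : Matrix (Fin P) (Fin P) ℝ) (C : Matrix (Fin P) (Fin N) ℝ) : Matrix (Fin M) (Fin P) ℝ :=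
  Matrix.of fun m p => if 0 ≤ gradB A β B S C m p then B m p else max (B m p) σ

/-- Denominator matrix of the additive B-update. -/
def denomB {M N P : ℕ} (A : Matrix (Fin M) (Fin N) ℝ) (β σ : ℝ)
    (B : Matrix (Fin M) (Fin P) ℝ) (S : Matrix (Fin P) (Fin P) ℝ) (C : Matrix (Fin P) (Fin N) ℝ) : Matrix (Fin M) (Fin P) ℝ :=
  Bbar A β σ B S C * S * C * Cᵀ * Sᵀ +
    β • (Bbar A β σ B S C * (Bbar A β σ B S C)ᵀ * Bbar A β σ B S C)

/-- Additive B-update U_B(B; δ). -/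
def UB {M N P : ℕ} (A : Matrix (Fin M) (Fin N) ℝ) (β σ : ℝ)
    (B : Matrix (Fin M) (Fin P) ℝ) (S : Matrix (Fin P) (Fin P) ℝ) (C : Matrix (Fin P) (Fin N) ℝ) (δ : ℝ) : Matrix (Fin M) (Fin P) ℝ :=
  Matrix.of fun m p =>
    B m p - Bbar A β σ B S C m p * gradB A β B S C m p / (denomB A β σ B S C m p + δ)

/-- I_m : set of non-KKT indices in row m of B. -/
def IsetB {M N P : ℕ} (A : Matrix (Fin M) (Fin N) ℝ) (β : ℝ)
    (B : Matrix (Fin M) (Fin P) ℝ) (S : Matrix (Fin P) (Fin P) ℝ) (C : Matrix (Fin P) (Fin N) ℝ) (m : Fin M) : Set (Fin P) :=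
  {p | (0 < B m p ∧ gradB A β B S C m p ≠ 0) ∨ (B m p = 0 ∧ gradB A β B S C m p < 0)}

/-- Diagonal entries d^m_{pp}(δ). -/
def dB {M N P : ℕ} (A : Matrix (Fin M) (Fin N) ℝ) (β σ : ℝ)
    (B : Matrix (Fin M) (Fin P) ℝ) (S : Matrix (Fin P) (Fin P) ℝ) (C : Matrix (Fin P) (Fin N) ℝ) (δ : ℝ) (m : Fin M) (p : Fin P) : ℝ :=
  if p ∈ IsetB A β B S C m then (denomB A β σ B S C m p + δ) / Bbar A β σ B S C m p else 0

/-- Auxiliary function G_B(B′, B; δ). -/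
def GB {M N P : ℕ} (A : Matrix (Fin M) (Fin N) ℝ) (α β σ : ℝ)
    (B : Matrix (Fin M) (Fin P) ℝ) (S : Matrix (Fin P) (Fin P) ℝ) (C : Matrix (Fin P) (Fin N) ℝ) (B' : Matrix (Fin M) (Fin P) ℝ) (δ : ℝ) : ℝ :=
  objJ A α β B S C + (∑ m, ∑ p, (B' m p - B m p) * gradB A β B S C m p) +
    (1 / 2) * ∑ m, ∑ p, dB A β σ B S C δ m p * (B' m p - B m p) ^ 2

/-- C̄. -/
def Cbar {M N P : ℕ} (A : Matrix (Fin M) (Fin N) ℝ) (α σ : ℝ)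
    (B : Matrix (Fin M) (Fin P) ℝ) (S : Matrix (Fin P) (Fin P) ℝ) (C : Matrix (Fin P) (Fin N) ℝ) : Matrix (Fin P) (Fin N) ℝ :=
  Matrix.of fun q n => if 0 ≤ gradC A α B S C q n then C q n else max (C q n) σ

/-- Denominator matrix of the additive C-update. -/
def denomC {M N P : ℕ} (A : Matrix (Fin M) (Fin N) ℝ) (α σ : ℝ)
    (B : Matrix (Fin M) (Fin P) ℝ) (S : Matrix (Fin P) (Fin P) ℝ) (C : Matrix (Fin P) (Fin N) ℝ) : Matrix (Fin P) (Fin N) ℝ :=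
  Sᵀ * Bᵀ * B * S * Cbar A α σ B S C +
    α • (Cbar A α σ B S C * (Cbar A α σ B S C)ᵀ * Cbar A α σ B S C)

/-- Additive C-update U_C(C; δ). -/
def UC {M N P : ℕ} (A : Matrix (Fin M) (Fin N) ℝ) (α σ : ℝ)
    (B : Matrix (Fin M) (Fin P) ℝ) (S : Matrix (Fin P) (Fin P) ℝ) (C : Matrix (Fin P) (Fin N) ℝ) (δ : ℝ) : Matrix (Fin P) (Fin N) ℝ :=
  Matrix.of fun q n =>
    C q n - Cbar A α σ B S C q n * gradC A α B S C q n / (denomC A α σ B S C q n + δ)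

/-- S̄. -/
def Sbar {M N P : ℕ} (A : Matrix (Fin M) (Fin N) ℝ) (σ : ℝ)
    (B : Matrix (Fin M) (Fin P) ℝ) (S : Matrix (Fin P) (Fin P) ℝ) (C : Matrix (Fin P) (Fin N) ℝ) : Matrix (Fin P) (Fin P) ℝ :=
  Matrix.of fun p q => if 0 ≤ gradS A B S C p q then S p q else max (S p q) σ

/-- Denominator matrix of the additive S-update. -/
def denomS {M N P : ℕ} (A : Matrix (Fin M) (Fin N) ℝ) (σ : ℝ)
    (B : Matrix (Fin M) (Fin P) ℝ) (S : Matrix (Fin P) (Fin P) ℝ) (C : Matrix (Fin P) (Fin N) ℝ) : Matrix (Fin P) (Fin P) ℝ :=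
  Bᵀ * B * Sbar A σ B S C * C * Cᵀ

/-- Additive S-update U_S(S; δ). -/
def US {M N P : ℕ} (A : Matrix (Fin M) (Fin N) ℝ) (σ : ℝ)
    (B : Matrix (Fin M) (Fin P) ℝ) (S : Matrix (Fin P) (Fin P) ℝ) (C : Matrix (Fin P) (Fin N) ℝ) (δ : ℝ) : Matrix (Fin P) (Fin P) ℝ :=
  Matrix.of fun p q =>
    S p q - Sbar A σ B S C p q * gradS A B S C p q / (denomS A σ B S C p q + δ)

/-- I_q : set of non-KKT indices in column q of S. -/
def IsetS {M N P : ℕ} (A : Matrix (Fin M) (Fin N) ℝ)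
    (B : Matrix (Fin M) (Fin P) ℝ) (S : Matrix (Fin P) (Fin P) ℝ) (C : Matrix (Fin P) (Fin N) ℝ) (q : Fin P) : Set (Fin P) :=
  {p | (0 < S p q ∧ gradS A B S C p q ≠ 0) ∨ (S p q = 0 ∧ gradS A B S C p q < 0)}

/-- Diagonal entries d^q_{pp}(δ). -/
def dS {M N P : ℕ} (A : Matrix (Fin M) (Fin N) ℝ) (σ : ℝ)
    (B : Matrix (Fin M) (Fin P) ℝ) (S : Matrix (Fin P) (Fin P) ℝ) (C : Matrix (Fin P) (Fin N) ℝ) (δ : ℝ) (p q : Fin P) : ℝ :=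
  if p ∈ IsetS A B S C q then (denomS A σ B S C p q + δ) / Sbar A σ B S C p q else 0

/-- Auxiliary function G_S(S′, S; δ). -/
def GS {M N P : ℕ} (A : Matrix (Fin M) (Fin N) ℝ) (α β σ : ℝ)
    (B : Matrix (Fin M) (Fin P) ℝ) (S : Matrix (Fin P) (Fin P) ℝ) (C : Matrix (Fin P) (Fin N) ℝ) (S' : Matrix (Fin P) (Fin P) ℝ) (δ : ℝ) : ℝ :=
  objJ A α β B S C + (∑ p, ∑ q, (S' p q - S p q) * gradS A B S C p q) +
    (1 / 2) * ∑ q, ∑ p, dS A σ B S C δ p q * (S' p q - S p q) ^ 2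


lemma entryMulNonneg {a b c : ℕ} {X : Matrix (Fin a) (Fin b) ℝ} {Y : Matrix (Fin b) (Fin c) ℝ}
    (hX : ∀ i j, 0 ≤ X i j) (hY : ∀ i j, 0 ≤ Y i j) : ∀ i j, 0 ≤ (X * Y) i j := by
  intro i j
  rw [Matrix.mul_apply]
  exact Finset.sum_nonneg fun k _ => mul_nonneg (hX i k) (hY k j)

lemma Bbar_nonneg {M N P : ℕ} (A : Matrix (Fin M) (Fin N) ℝ) (β σ : ℝ)
    (B : Matrix (Fin M) (Fin P) ℝ) (S : Matrix (Fin P) (Fin P) ℝ) (C : Matrix (Fin P) (Fin N) ℝ)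
    (hB : ∀ m p, 0 ≤ B m p) (hσ : 0 ≤ σ) : ∀ m p, 0 ≤ Bbar A β σ B S C m p := by
  intro m p
  simp only [Bbar, Matrix.of_apply]
  split
  · exact hB m p
  · exact le_max_of_le_right hσ

lemma denomB_nonneg {M N P : ℕ} (A : Matrix (Fin M) (Fin N) ℝ) (β σ : ℝ)
    (B : Matrix (Fin M) (Fin P) ℝ) (S : Matrix (Fin P) (Fin P) ℝ) (C : Matrix (Fin P) (Fin N) ℝ)
    (hβ : 0 ≤ β) (hσ : 0 ≤ σ) (hB : ∀ m p, 0 ≤ B m p) (hS : ∀ p q, 0 ≤ S p q)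
    (hC : ∀ q n, 0 ≤ C q n) : ∀ m p, 0 ≤ denomB A β σ B S C m p := by
  intro m p
  have hBb := Bbar_nonneg A β σ B S C hB hσ
  have hT : ∀ i j, 0 ≤ (Bbar A β σ B S C)ᵀ i j := fun i j => hBb j i
  have hCT : ∀ (i : Fin N) (j : Fin P), 0 ≤ Cᵀ i j := fun i j => hC j i
  have hST : ∀ i j, 0 ≤ Sᵀ i j := fun i j => hS j i
  have h1 := entryMulNonneg (entryMulNonneg (entryMulNonneg (entryMulNonneg hBb hS) hC) hCT) hST m p
  have h2 := entryMulNonneg (entryMulNonneg hBb hT) hBb m p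
  simp only [denomB, Matrix.add_apply, Matrix.smul_apply, smul_eq_mul]
  exact add_nonneg h1 (mul_nonneg hβ h2)

theorem stmt_1 {M N P : ℕ} (A : Matrix (Fin M) (Fin N) ℝ) (hA : ∀ i j, 0 ≤ A i j)
    (α β σ : ℝ) (hα : 0 < α) (hβ : 0 < β) (hσ : 0 < σ)
    (B : Matrix (Fin M) (Fin P) ℝ) (S : Matrix (Fin P) (Fin P) ℝ) (C : Matrix (Fin P) (Fin N) ℝ)
    (hB : ∀ m p, 0 ≤ B m p) (hS : ∀ p q, 0 ≤ S p q) (hC : ∀ q n, 0 ≤ C q n)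
    (δ : ℝ) (hδ : 0 < δ) :
    GB A α β σ B S C (UB A β σ B S C δ) δ ≤ GB A α β σ B S C B δ ∧
    GB A α β σ B S C B δ = objJ A α β B S C ∧
    (GB A α β σ B S C (UB A β σ B S C δ) δ = GB A α β σ B S C B δ ↔ KKTB A β B S C) := by
  have hbbnn : ∀ m p, 0 ≤ Bbar A β σ B S C m p := Bbar_nonneg A β σ B S C hB hσ.le
  have hdenpos : ∀ m p, 0 < denomB A β σ B S C m p + δ := fun m p =>
    add_pos_of_nonneg_of_pos (denomB_nonneg A β σ B S C hβ.le hσ.le hB hS hC m p) hδ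
  have hdiff : ∀ m p, UB A β σ B S C δ m p - B m p
      = -(Bbar A β σ B S C m p * gradB A β B S C m p / (denomB A β σ B S C m p + δ)) := by
    intro m p
    simp only [UB, Matrix.of_apply]
    ring
  set F : Fin M → Fin P → ℝ := fun m p =>
    (UB A β σ B S C δ m p - B m p) * gradB A β B S C m p
      + (1/2) * (dB A β σ B S C δ m p * (UB A β σ B S C δ m p - B m p)^2) with hF
  have key : ∀ m p, F m p ≤ 0 ∧
      (F m p = 0 ↔ (0 ≤ gradB A β B S C m p ∧ gradB A β B S C m p * B m p = 0)) := by
    intro m p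
    by_cases hI : p ∈ IsetB A β B S C m
    · have hI' := hI
      simp only [IsetB, Set.mem_setOf_eq] at hI'
      have hGne : gradB A β B S C m p ≠ 0 := by
        rcases hI' with ⟨_, h⟩ | ⟨_, h⟩
        · exact h
        · exact ne_of_lt h
      have hBBpos : 0 < Bbar A β σ B S C m p := by
        rcases hI' with ⟨h1, _⟩ | ⟨h1, h2⟩
        · simp only [Bbar, Matrix.of_apply]
          split
          · exact h1
          · exact lt_of_lt_of_le h1 (le_max_left _ _)
        · simp only [Bbar, Matrix.of_apply, if_neg (not_le.mpr h2)]
          exact lt_of_lt_of_le hσ (le_max_right _ _)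
      have hFval : F m p = -(1/2) * (Bbar A β σ B S C m p * (gradB A β B S C m p)^2
          / (denomB A β σ B S C m p + δ)) := by
        simp only [hF, hdiff m p, dB, if_pos hI]
        have hd := (hdenpos m p).ne'
        have hb := hBBpos.ne'
        field_simp
        ring
      have hFneg : F m p < 0 := by
        rw [hFval]
        have h2 : 0 < (gradB A β B S C m p)^2 := by positivity
        have : 0 < Bbar A β σ B S C m p * (gradB A β B S C m p)^2
            / (denomB A β σ B S C m p + δ) := div_pos (mul_pos hBBpos h2) (hdenpos m p)
        linarith
      refine ⟨hFneg.le, ?_⟩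
      constructor
      · intro h; exact absurd h hFneg.ne
      · rintro ⟨hg0, hgb⟩
        exfalso
        rcases hI' with ⟨h1, h2⟩ | ⟨h1, h2⟩
        · rcases mul_eq_zero.mp hgb with h | h
          · exact h2 h
          · exact h1.ne' h
        · exact absurd hg0 (not_le.mpr h2)
    · have hI' := hI
      simp only [IsetB, Set.mem_setOf_eq, not_or, not_and, not_lt, ne_eq, not_not] at hI'
      have hcond : (B m p = 0 ∧ 0 ≤ gradB A β B S C m p) ∨
          (0 < B m p ∧ gradB A β B S C m p = 0) := by
        rcases (hB m p).eq_or_lt with h0 | h0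
        · exact Or.inl ⟨h0.symm, hI'.2 h0.symm⟩
        · exact Or.inr ⟨h0, hI'.1 h0⟩
      have hzero : Bbar A β σ B S C m p * gradB A β B S C m p = 0 := by
        rcases hcond with ⟨h0, hg⟩ | ⟨_, hg⟩
        · simp [Bbar, if_pos hg, h0]
        · simp [hg]
      have hdz : dB A β σ B S C δ m p = 0 := if_neg hI
      have hFz : F m p = 0 := by
        simp [hF, hdiff m p, hzero, hdz]
      refine ⟨hFz.le, ?_⟩
      constructor
      · intro _
        rcases hcond with ⟨h0, hg⟩ | ⟨_, hg⟩
        · exact ⟨hg, by rw [h0]; ring⟩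
        · exact ⟨hg.ge, by rw [hg]; ring⟩
      · intro _; exact hFz
  have hGBB : GB A α β σ B S C B δ = objJ A α β B S C := by
    simp [GB]
  have hGBU : GB A α β σ B S C (UB A β σ B S C δ) δ = objJ A α β B S C + ∑ m, ∑ p, F m p := by
    simp only [GB, hF]
    rw [add_assoc]
    congr 1
    rw [Finset.mul_sum, ← Finset.sum_add_distrib]
    refine Finset.sum_congr rfl fun m _ => ?_
    rw [Finset.mul_sum, ← Finset.sum_add_distrib]
  have hrownp : ∀ m ∈ (Finset.univ : Finset (Fin M)), ∑ p, F m p ≤ 0 :=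
    fun m _ => Finset.sum_nonpos fun p _ => (key m p).1
  have hsle : ∑ m, ∑ p, F m p ≤ 0 := Finset.sum_nonpos hrownp
  refine ⟨by rw [hGBU, hGBB]; linarith, hGBB, ?_⟩
  rw [hGBU, hGBB, add_eq_left]
  constructor
  · intro hsz
    have hrow := (Finset.sum_eq_zero_iff_of_nonpos hrownp).mp hsz
    intro m p
    have hmp := (Finset.sum_eq_zero_iff_of_nonpos (fun p _ => (key m p).1)).mp
      (hrow m (Finset.mem_univ m)) p (Finset.mem_univ p)
    exact (key m p).2.mp hmp
  · intro hK
    refine Finset.sum_eq_zero fun m _ => Finset.sum_eq_zero fun p _ => ?_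
    exact (key m p).2.mpr (hK m p)
end
end

section
/- Let B, S, C be entrywise nonnegative with all entries bounded above by a constant K > 0. Then there exists δ₀ > 0 (depending only on A, α, β, σ and K) such that for every δ ≥ δ₀ and every entrywise nonnegative matrix S′ (P×P) whose entries are bounded by K and which satisfies s′_{pq} = s_{pq} for all q and all p ∉ I_q, one has J(B, S′, C) ≤ G_S(S′, S; δ); moreover, for such δ, equality forces S′ = S, and when S′ = U_S(S; δ) the equality J(B,S′,C) = G_S(S′,S;δ) holds if and only if S satisfies the S-part KKT conditions. (Paper's Theorem 27.) -/
open Matrix Classical Filter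

noncomputable section

lemma frobSq_nonneg {m n : ℕ} (X : Matrix (Fin m) (Fin n) ℝ) : 0 ≤ frobSq X :=
  Finset.sum_nonneg fun _ _ => Finset.sum_nonneg fun _ _ => sq_nonneg _

lemma inner_trace {a b : ℕ} (U V : Matrix (Fin a) (Fin b) ℝ) :
    ∑ i, ∑ j, U i j * V i j = Matrix.trace (U * Vᵀ) := by
  simp [Matrix.trace, Matrix.diag, Matrix.mul_apply]

lemma trace_inner {m n p q : ℕ} (X : Matrix (Fin m) (Fin n) ℝ) (B : Matrix (Fin m) (Fin p) ℝ)
    (D : Matrix (Fin p) (Fin q) ℝ) (C : Matrix (Fin q) (Fin n) ℝ) :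
    ∑ i, ∑ j, X i j * (B*D*C) i j = ∑ r, ∑ t, (Bᵀ*X*Cᵀ) r t * D r t := by
  rw [inner_trace, inner_trace]
  rw [Matrix.transpose_mul, Matrix.transpose_mul]
  rw [← Matrix.mul_assoc, ← Matrix.mul_assoc, Matrix.trace_mul_comm]
  rw [← Matrix.mul_assoc, ← Matrix.mul_assoc]

lemma frobSq_sub {m n : ℕ} (X Y : Matrix (Fin m) (Fin n) ℝ) :
    frobSq (X - Y) = frobSq X - 2 * (∑ i, ∑ j, X i j * Y i j) + frobSq Y := by
  have h : ∀ i j, (X i j - Y i j)^2 = X i j^2 - 2*(X i j * Y i j) + Y i j^2 := fun i j => by ring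
  simp only [frobSq, Matrix.sub_apply, h, Finset.sum_add_distrib, Finset.sum_sub_distrib,
    Finset.mul_sum]

lemma entry_nonneg_mul {a b c : ℕ} {X : Matrix (Fin a) (Fin b) ℝ} {Y : Matrix (Fin b) (Fin c) ℝ}
    (hX : ∀ i j, 0 ≤ X i j) (hY : ∀ i j, 0 ≤ Y i j) : ∀ i j, 0 ≤ (X*Y) i j := by
  intro i j
  rw [Matrix.mul_apply]
  exact Finset.sum_nonneg fun k _ => mul_nonneg (hX i k) (hY k j)

lemma entry_mono_mul {a b c d : ℕ} {X : Matrix (Fin a) (Fin b) ℝ} {Y Y' : Matrix (Fin b) (Fin c) ℝ}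
    {Z : Matrix (Fin c) (Fin d) ℝ}
    (hX : ∀ i j, 0 ≤ X i j) (hZ : ∀ i j, 0 ≤ Z i j) (hY : ∀ i j, Y i j ≤ Y' i j) :
    ∀ i j, (X*Y*Z) i j ≤ (X*Y'*Z) i j := by
  intro i j
  simp only [Matrix.mul_apply]
  refine Finset.sum_le_sum fun t _ => mul_le_mul_of_nonneg_right ?_ (hZ t j)
  exact Finset.sum_le_sum fun r _ => mul_le_mul_of_nonneg_left (hY r t) (hX i r)

lemma frobSq_mul_le {m p q n : ℕ} (B : Matrix (Fin m) (Fin p) ℝ) (D : Matrix (Fin p) (Fin q) ℝ)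
    (C : Matrix (Fin q) (Fin n) ℝ) :
    frobSq (B*D*C) ≤ frobSq B * frobSq C * frobSq D := by
  have key : ∀ i j, ((B*D*C) i j)^2 ≤ ((∑ r, (B i r)^2) * (∑ t, (C t j)^2)) * frobSq D := by
    intro i j
    have h1 : (B*D*C) i j = ∑ x : Fin p × Fin q, (B i x.1 * C x.2 j) * D x.1 x.2 := by
      rw [Fintype.sum_prod_type]
      simp only [Matrix.mul_apply, Finset.sum_mul]
      rw [Finset.sum_comm]
      exact Finset.sum_congr rfl fun r _ => Finset.sum_congr rfl fun t _ => by ring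
    have h2 : (∑ x : Fin p × Fin q, (B i x.1 * C x.2 j)^2) = (∑ r, (B i r)^2) * (∑ t, (C t j)^2) := by
      rw [Fintype.sum_prod_type, Finset.sum_mul_sum]
      exact Finset.sum_congr rfl fun r _ => Finset.sum_congr rfl fun t _ => by ring
    have h3 : frobSq D = ∑ x : Fin p × Fin q, (D x.1 x.2)^2 := by
      rw [Fintype.sum_prod_type]; rfl
    rw [h1, h3, ← h2]
    exact Finset.sum_mul_sq_le_sq_mul_sq _ _ _
  calc frobSq (B*D*C) ≤ ∑ i, ∑ j, ((∑ r, (B i r)^2) * (∑ t, (C t j)^2)) * frobSq D :=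
        Finset.sum_le_sum fun i _ => Finset.sum_le_sum fun j _ => key i j
    _ = (∑ i, ∑ j, ((∑ r, (B i r)^2) * (∑ t, (C t j)^2))) * frobSq D := by
        rw [Finset.sum_mul]
        exact Finset.sum_congr rfl fun i _ => (Finset.sum_mul _ _ _).symm
    _ = frobSq B * frobSq C * frobSq D := by
        simp only [frobSq]
        rw [Finset.sum_comm (f := fun t j => (C t j)^2), ← Finset.sum_mul_sum]


lemma objJ_expand {M N P : ℕ} (A : Matrix (Fin M) (Fin N) ℝ) (α β : ℝ)
    (B : Matrix (Fin M) (Fin P) ℝ) (S S' : Matrix (Fin P) (Fin P) ℝ) (C : Matrix (Fin P) (Fin N) ℝ) :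
    objJ A α β B S' C = objJ A α β B S C
      + (∑ p, ∑ q, (S' p q - S p q) * gradS A B S C p q)
      + (1/2) * frobSq (B*(S'-S)*C) := by
  have hmat : A - B*S'*C = (A - B*S*C) - B*(S'-S)*C := by
    rw [Matrix.mul_sub, Matrix.sub_mul]
    abel
  have hg : Bᵀ*(A - B*S*C)*Cᵀ = -(gradS A B S C) := by
    simp only [gradS, Matrix.mul_sub, Matrix.sub_mul, Matrix.mul_assoc, neg_sub]
  have hinner := trace_inner (A - B*S*C) B (S' - S) C
  rw [hg] at hinner
  have hlin : ∑ r, ∑ t, (-(gradS A B S C)) r t * (S' - S) r t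
      = -∑ p, ∑ q, (S' p q - S p q) * gradS A B S C p q := by
    rw [← Finset.sum_neg_distrib]
    refine Finset.sum_congr rfl fun p _ => ?_
    rw [← Finset.sum_neg_distrib]
    refine Finset.sum_congr rfl fun q _ => ?_
    simp [Matrix.neg_apply, Matrix.sub_apply]; ring
  rw [hlin] at hinner
  simp only [objJ]
  rw [hmat, frobSq_sub, hinner]
  ring
theorem stmt_4 {M N P : ℕ} (A : Matrix (Fin M) (Fin N) ℝ) (hA : ∀ i j, 0 ≤ A i j)
    (α β σ K : ℝ) (hα : 0 < α) (hβ : 0 < β) (hσ : 0 < σ) (hK : 0 < K) :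
    ∃ δ₀ > 0, ∀ (B : Matrix (Fin M) (Fin P) ℝ) (S : Matrix (Fin P) (Fin P) ℝ) (C : Matrix (Fin P) (Fin N) ℝ),
      (∀ m p, 0 ≤ B m p) → (∀ p q, 0 ≤ S p q) → (∀ q n, 0 ≤ C q n) →
      (∀ m p, B m p ≤ K) → (∀ p q, S p q ≤ K) → (∀ q n, C q n ≤ K) →
      ∀ δ, δ₀ ≤ δ →
        (∀ S' : Matrix (Fin P) (Fin P) ℝ,
          (∀ p q, 0 ≤ S' p q) → (∀ p q, S' p q ≤ K) →
          (∀ p q, p ∉ IsetS A B S C q → S' p q = S p q) →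
          objJ A α β B S' C ≤ GS A α β σ B S C S' δ ∧
            (objJ A α β B S' C = GS A α β σ B S C S' δ → S' = S)) ∧
        (objJ A α β B (US A σ B S C δ) C = GS A α β σ B S C (US A σ B S C δ) δ ↔
          KKTS A B S C) := by
  classical
  set Kσ : ℝ := max K σ with hKσdef
  have hKσpos : 0 < Kσ := lt_of_lt_of_le hK (le_max_left _ _)
  set L : ℝ := ((M*P : ℕ) : ℝ) * K^2 * (((P*N : ℕ) : ℝ) * K^2) with hLdef
  have hL0 : 0 ≤ L := by positivity
  refine ⟨(L+1)*Kσ, by positivity, ?_⟩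
  intro B S C hB hS hC hBK hSK hCK δ hδ
  have hδpos : 0 < δ := lt_of_lt_of_le (by positivity) hδ
  have hBt : ∀ i j, 0 ≤ Bᵀ i j := fun i j => hB j i
  have hCt : ∀ i j, 0 ≤ Cᵀ i j := fun i j => hC j i
  have hSbar_nonneg : ∀ p q, 0 ≤ Sbar A σ B S C p q := by
    intro p q; simp only [Sbar, Matrix.of_apply]
    split
    · exact hS p q
    · exact le_trans hσ.le (le_max_right _ _)
  have hSbar_le : ∀ p q, Sbar A σ B S C p q ≤ Kσ := by
    intro p q; simp only [Sbar, Matrix.of_apply]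
    split
    · exact le_trans (hSK p q) (le_max_left _ _)
    · exact max_le_max (hSK p q) le_rfl
  have hS_le_Sbar : ∀ p q, S p q ≤ Sbar A σ B S C p q := by
    intro p q; simp only [Sbar, Matrix.of_apply]
    split
    · exact le_rfl
    · exact le_max_left _ _
  have hden_nonneg : ∀ p q, 0 ≤ denomS A σ B S C p q := by
    intro p q
    simp only [denomS]
    exact entry_nonneg_mul (entry_nonneg_mul (entry_nonneg_mul
      (entry_nonneg_mul hBt hB) hSbar_nonneg) hC) hCt p q
  have hden_pos : ∀ p q, 0 < denomS A σ B S C p q + δ :=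
    fun p q => add_pos_of_nonneg_of_pos (hden_nonneg p q) hδpos
  have hgrad_le_den : ∀ p q, gradS A B S C p q ≤ denomS A σ B S C p q := by
    intro p q
    have hBACt : 0 ≤ (Bᵀ*A*Cᵀ) p q :=
      entry_nonneg_mul (entry_nonneg_mul hBt hA) hCt p q
    have h1 : gradS A B S C p q ≤ (Bᵀ*B*S*C*Cᵀ) p q := by
      simp only [gradS, Matrix.sub_apply]; linarith
    have e1 : Bᵀ*B*S*C*Cᵀ = (Bᵀ*B)*S*(C*Cᵀ) := by simp only [Matrix.mul_assoc]
    have e2 : denomS A σ B S C = (Bᵀ*B)*(Sbar A σ B S C)*(C*Cᵀ) := by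
      simp only [denomS, Matrix.mul_assoc]
    have h2 : ((Bᵀ*B)*S*(C*Cᵀ)) p q ≤ ((Bᵀ*B)*(Sbar A σ B S C)*(C*Cᵀ)) p q :=
      entry_mono_mul (entry_nonneg_mul hBt hB) (entry_nonneg_mul hC hCt) hS_le_Sbar p q
    rw [e2]; rw [e1] at h1; linarith
  -- main claim
  have main : ∀ S' : Matrix (Fin P) (Fin P) ℝ, (∀ p q, 0 ≤ S' p q) →
      (∀ p q, p ∉ IsetS A B S C q → S' p q = S p q) →
      objJ A α β B S' C ≤ GS A α β σ B S C S' δ ∧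
        (objJ A α β B S' C = GS A α β σ B S C S' δ → S' = S) := by
    intro S' hS'0 hS'supp
    set Dq : ℝ := ∑ p, ∑ q, (S' p q - S p q)^2 with hDdef
    have hD0 : 0 ≤ Dq :=
      Finset.sum_nonneg fun _ _ => Finset.sum_nonneg fun _ _ => sq_nonneg _
    have hdiff : objJ A α β B S' C - GS A α β σ B S C S' δ
        = (1/2) * frobSq (B*(S'-S)*C)
          - (1/2) * ∑ q, ∑ p, dS A σ B S C δ p q * (S' p q - S p q)^2 := by
      rw [objJ_expand A α β B S S' C]; simp only [GS]; ring
    have hfsD : frobSq (S'-S) = Dq := by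
      simp only [frobSq, Matrix.sub_apply, hDdef]
    have hB2 : frobSq B ≤ ((M*P : ℕ) : ℝ) * K^2 := by
      calc frobSq B ≤ ∑ _i : Fin M, ∑ _j : Fin P, K^2 :=
            Finset.sum_le_sum fun i _ => Finset.sum_le_sum fun j _ =>
              pow_le_pow_left₀ (hB i j) (hBK i j) 2
        _ = ((M*P : ℕ) : ℝ) * K^2 := by
            simp [Finset.sum_const, mul_assoc, mul_comm, mul_left_comm]
    have hC2 : frobSq C ≤ ((P*N : ℕ) : ℝ) * K^2 := by
      calc frobSq C ≤ ∑ _i : Fin P, ∑ _j : Fin N, K^2 :=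
            Finset.sum_le_sum fun i _ => Finset.sum_le_sum fun j _ =>
              pow_le_pow_left₀ (hC i j) (hCK i j) 2
        _ = ((P*N : ℕ) : ℝ) * K^2 := by
            simp [Finset.sum_const, mul_assoc, mul_comm, mul_left_comm]
    have hfs : frobSq (B*(S'-S)*C) ≤ L * Dq := by
      calc frobSq (B*(S'-S)*C) ≤ frobSq B * frobSq C * frobSq (S'-S) :=
            frobSq_mul_le B (S'-S) C
        _ ≤ L * Dq := by
            rw [hfsD, hLdef]
            exact mul_le_mul
              (mul_le_mul hB2 hC2 (frobSq_nonneg C) (by positivity)) le_rfl hD0 (by positivity)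
    have hq : ∀ q p, (L+1) * (S' p q - S p q)^2 ≤ dS A σ B S C δ p q * (S' p q - S p q)^2 := by
      intro q p
      by_cases hp : p ∈ IsetS A B S C q
      · have hsb_pos : 0 < Sbar A σ B S C p q := by
          simp only [Sbar, Matrix.of_apply]
          rcases hp with ⟨hs, _⟩ | ⟨_, hg⟩
          · split
            · exact hs
            · exact lt_of_lt_of_le hσ (le_max_right _ _)
          · rw [if_neg (not_le.2 hg)]
            exact lt_of_lt_of_le hσ (le_max_right _ _)
        have hd : (L+1) ≤ dS A σ B S C δ p q := by
          rw [dS, if_pos hp, le_div_iff₀ hsb_pos]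
          have h1 : (L+1) * Sbar A σ B S C p q ≤ (L+1) * Kσ :=
            mul_le_mul_of_nonneg_left (hSbar_le p q) (by positivity)
          have h2 : δ ≤ denomS A σ B S C p q + δ := le_add_of_nonneg_left (hden_nonneg p q)
          linarith
        exact mul_le_mul_of_nonneg_right hd (sq_nonneg _)
      · rw [hS'supp p q hp]; simp
    have hQ : (L+1) * Dq ≤ ∑ q, ∑ p, dS A σ B S C δ p q * (S' p q - S p q)^2 := by
      have hcomm : Dq = ∑ q, ∑ p, (S' p q - S p q)^2 := Finset.sum_comm
      rw [hcomm, Finset.mul_sum]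
      exact Finset.sum_le_sum fun q _ => by
        rw [Finset.mul_sum]
        exact Finset.sum_le_sum fun p _ => hq q p
    constructor
    · linarith
    · intro heq
      have hDz : Dq = 0 := by linarith
      have hall : ∀ p ∈ Finset.univ, ∑ q, (S' p q - S p q)^2 = 0 :=
        (Finset.sum_eq_zero_iff_of_nonneg fun p _ =>
          Finset.sum_nonneg fun q _ => sq_nonneg _).mp hDz
      ext p q
      have := (Finset.sum_eq_zero_iff_of_nonneg fun q _ => sq_nonneg _).mp
        (hall p (Finset.mem_univ p)) q (Finset.mem_univ q)
      have := pow_eq_zero_iff (n := 2) (by norm_num) |>.mp this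
      linarith [sub_eq_zero.mp this]
  refine ⟨fun S' h0 _ hsupp => main S' h0 hsupp, ?_, ?_⟩
  · -- equality for US implies KKTS
    intro heq
    have hUS0 : ∀ p q, 0 ≤ US A σ B S C δ p q := by
      intro p q
      simp only [US, Matrix.of_apply]
      by_cases hg : 0 ≤ gradS A B S C p q
      · have hsb : Sbar A σ B S C p q = S p q := by simp only [Sbar, Matrix.of_apply, if_pos hg]
        rw [hsb, sub_nonneg, div_le_iff₀ (hden_pos p q)]
        exact mul_le_mul_of_nonneg_left
          (le_trans (hgrad_le_den p q) (le_add_of_nonneg_right hδpos.le)) (hS p q)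
      · push_neg at hg
        have h1 : Sbar A σ B S C p q * gradS A B S C p q ≤ 0 :=
          mul_nonpos_of_nonneg_of_nonpos (hSbar_nonneg p q) hg.le
        have h2 : Sbar A σ B S C p q * gradS A B S C p q / (denomS A σ B S C p q + δ) ≤ 0 :=
          div_nonpos_of_nonpos_of_nonneg h1 (hden_pos p q).le
        linarith [hS p q]
    have hUSsupp : ∀ p q, p ∉ IsetS A B S C q → US A σ B S C δ p q = S p q := by
      intro p q hp
      simp only [US, Matrix.of_apply]
      by_cases hg0 : gradS A B S C p q = 0
      · rw [hg0]; simp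
      · have hs0 : S p q = 0 := by
          by_contra hs
          exact hp (Or.inl ⟨lt_of_le_of_ne (hS p q) (Ne.symm hs), hg0⟩)
        have hgpos : 0 ≤ gradS A B S C p q := by
          by_contra hgneg
          exact hp (Or.inr ⟨hs0, not_le.mp hgneg⟩)
        have hsb : Sbar A σ B S C p q = S p q := by
          simp only [Sbar, Matrix.of_apply, if_pos hgpos]
        rw [hsb, hs0]; simp
    have hUSS := (main _ hUS0 hUSsupp).2 heq
    intro p q
    have hentry : US A σ B S C δ p q = S p q := by rw [hUSS]
    have h0 : Sbar A σ B S C p q * gradS A B S C p q / (denomS A σ B S C p q + δ) = 0 := by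
      simp only [US, Matrix.of_apply] at hentry
      linarith
    have hnum : Sbar A σ B S C p q * gradS A B S C p q = 0 := by
      rcases div_eq_zero_iff.mp h0 with h | h
      · exact h
      · exact absurd h (ne_of_gt (hden_pos p q))
    have hg : 0 ≤ gradS A B S C p q := by
      by_contra hneg
      push_neg at hneg
      have hsb : Sbar A σ B S C p q = max (S p q) σ := by
        simp only [Sbar, Matrix.of_apply, if_neg (not_le.2 hneg)]
      have hpos : 0 < Sbar A σ B S C p q := by
        rw [hsb]; exact lt_of_lt_of_le hσ (le_max_right _ _)
      exact mul_ne_zero (ne_of_gt hpos) (ne_of_lt hneg) hnum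
    refine ⟨hg, ?_⟩
    have hsb : Sbar A σ B S C p q = S p q := by
      simp only [Sbar, Matrix.of_apply, if_pos hg]
    rw [mul_comm, ← hsb]; exact hnum
  · -- KKTS implies equality
    intro hkkt
    have hUSS : US A σ B S C δ = S := by
      ext p q
      simp only [US, Matrix.of_apply]
      have hg := (hkkt p q).1
      have hgs := (hkkt p q).2
      have hsb : Sbar A σ B S C p q = S p q := by
        simp only [Sbar, Matrix.of_apply, if_pos hg]
      rw [hsb, mul_comm, hgs]
      simp
    rw [hUSS]
    simp [GS]
end
end

section
/- Let B, S, C be entrywise nonnegative, σ > 0, δ > 0, and suppose I_q is nonempty for at least one q. Then the function S′ ↦ G_S(S′, S; δ), restricted to the affine set of P×P matrices S′ with s′_{pq} = s_{pq} for all q and all p ∉ I_q, is strictly convex, and its unique minimizer on that set is S⁺ = U_S(S; δ); equivalently, S⁺ is the unique matrix in that set satisfying, for every q and every p ∈ I_q, d^q_{pp}(δ)·(s′_{pq} − s_{pq}) + (∇_S J)_{pq} = 0. -/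
open Matrix Classical Filter

noncomputable section

/-! The S-part of the auxiliary function is a separable quadratic `J + Σ (s′ - s) g + ½ Σ d (s′ - s)²`
whose curvature `d` is positive exactly on the free entries `I`, while the other entries are pinned to
`s`. On that affine set it is therefore strictly convex, and by completing the square it equals its
value at the stationary point plus `½ Σ d (s′ - s⁺)²`. The additive update `U_S` is that stationary
point: on `I` it solves `d (s⁺ - s) + g = 0` because `d = (denominator + δ) / s̄` with `s̄ > 0`, and
off `I` either `g = 0` or `s = s̄ = 0`, so it leaves the entry unchanged. -/

section QuadModel

variable {m n : Type*} {I : m → n → Prop} {S g d X Y Z : Matrix m n ℝ}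

def fixedOff (I : m → n → Prop) (S : Matrix m n ℝ) : Set (Matrix m n ℝ) :=
  {X | ∀ i j, ¬ I i j → X i j = S i j}

theorem convex_fixedOff : Convex ℝ (fixedOff I S) := by
  intro X hX Y hY a b _ _ hab i j hij
  simp only [Matrix.add_apply, Matrix.smul_apply, smul_eq_mul, hX i j hij, hY i j hij]
  linear_combination S i j * hab

theorem stationary_iff_eq (hd : ∀ i j, I i j → 0 < d i j) (hX : X ∈ fixedOff I S)
    (hZ : Z ∈ fixedOff I S) (hstat : ∀ i j, I i j → d i j * (Z i j - S i j) + g i j = 0) :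
    (∀ i j, I i j → d i j * (X i j - S i j) + g i j = 0) ↔ X = Z := by
  refine ⟨fun hX' => Matrix.ext fun i j => ?_, fun h => h ▸ hstat⟩
  by_cases hij : I i j
  · have hdiff : d i j * (X i j - Z i j) = 0 := by linarith [hX' i j hij, hstat i j hij]
    linarith [(mul_eq_zero.mp hdiff).resolve_left (hd i j hij).ne']
  · rw [hX i j hij, hZ i j hij]

variable [Fintype m] [Fintype n]

def quadModel (S g d X : Matrix m n ℝ) : ℝ :=
  ∑ i, ∑ j, ((X i j - S i j) * g i j + d i j * (X i j - S i j) ^ 2 / 2)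

theorem quadModel_smul_add_smul {a b : ℝ} (hab : a + b = 1) :
    quadModel S g d (a • X + b • Y) = a * quadModel S g d X + b * quadModel S g d Y -
      a * b / 2 * ∑ i, ∑ j, d i j * (X i j - Y i j) ^ 2 := by
  obtain rfl : b = 1 - a := by linarith
  simp only [quadModel, Finset.mul_sum, ← Finset.sum_add_distrib, ← Finset.sum_sub_distrib]
  refine Finset.sum_congr rfl fun i _ => Finset.sum_congr rfl fun j _ => ?_
  simp only [Matrix.add_apply, Matrix.smul_apply, smul_eq_mul]
  ring

theorem sum_weighted_sq_sub_pos (hd : ∀ i j, I i j → 0 < d i j) (hX : X ∈ fixedOff I S)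
    (hY : Y ∈ fixedOff I S) (hXY : X ≠ Y) :
    0 < ∑ i, ∑ j, d i j * (X i j - Y i j) ^ 2 := by
  have hterm : ∀ i j, 0 ≤ d i j * (X i j - Y i j) ^ 2 := fun i j => by
    by_cases hij : I i j
    · exact mul_nonneg (hd i j hij).le (sq_nonneg _)
    · simp [hX i j hij, hY i j hij]
  obtain ⟨i, j, hne⟩ : ∃ i j, X i j ≠ Y i j := by
    by_contra! h
    exact hXY (Matrix.ext h)
  have hij : I i j := by
    by_contra hij
    exact hne ((hX i j hij).trans (hY i j hij).symm)
  refine Finset.sum_pos' (fun i _ => Finset.sum_nonneg fun j _ => hterm i j) ⟨i, by simp, ?_⟩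
  refine Finset.sum_pos' (fun j _ => hterm i j) ⟨j, by simp, ?_⟩
  exact mul_pos (hd i j hij) (sq_pos_of_ne_zero (sub_ne_zero.mpr hne))

theorem strictConvexOn_quadModel (hd : ∀ i j, I i j → 0 < d i j) :
    StrictConvexOn ℝ (fixedOff I S) (quadModel S g d) := by
  refine ⟨convex_fixedOff, fun X hX Y hY hXY a b ha hb hab => ?_⟩
  rw [quadModel_smul_add_smul hab, smul_eq_mul, smul_eq_mul]
  have := mul_pos (mul_pos ha hb) (sum_weighted_sq_sub_pos hd hX hY hXY)
  linarith

theorem quadModel_eq_add_of_stationary (hX : X ∈ fixedOff I S) (hZ : Z ∈ fixedOff I S)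
    (hstat : ∀ i j, I i j → d i j * (Z i j - S i j) + g i j = 0) :
    quadModel S g d X = quadModel S g d Z + (∑ i, ∑ j, d i j * (X i j - Z i j) ^ 2) / 2 := by
  simp only [quadModel, Finset.sum_div, ← Finset.sum_add_distrib]
  refine Finset.sum_congr rfl fun i _ => Finset.sum_congr rfl fun j _ => ?_
  by_cases hij : I i j
  · rw [show g i j = -(d i j * (Z i j - S i j)) by linarith [hstat i j hij]]
    ring
  · simp [hX i j hij, hZ i j hij]

theorem quadModel_lt_of_stationary (hd : ∀ i j, I i j → 0 < d i j) (hX : X ∈ fixedOff I S)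
    (hZ : Z ∈ fixedOff I S) (hstat : ∀ i j, I i j → d i j * (Z i j - S i j) + g i j = 0)
    (hXZ : X ≠ Z) : quadModel S g d Z < quadModel S g d X := by
  rw [quadModel_eq_add_of_stationary hX hZ hstat]
  linarith [sum_weighted_sq_sub_pos hd hX hZ hXZ]

end QuadModel

section SUpdate

variable {M N P : ℕ} {A : Matrix (Fin M) (Fin N) ℝ} {σ δ : ℝ}
  {B : Matrix (Fin M) (Fin P) ℝ} {S : Matrix (Fin P) (Fin P) ℝ} {C : Matrix (Fin P) (Fin N) ℝ}

theorem GS_eq_quadModel_add_objJ (α β : ℝ) (X : Matrix (Fin P) (Fin P) ℝ) :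
    GS A α β σ B S C X δ = quadModel S (gradS A B S C) (dS A σ B S C δ) X + objJ A α β B S C := by
  unfold GS quadModel
  rw [Finset.sum_comm (f := fun q p => dS A σ B S C δ p q * _), Finset.mul_sum, add_assoc,
    ← Finset.sum_add_distrib, add_comm]
  refine congrArg (· + _) (Finset.sum_congr rfl fun p _ => ?_)
  rw [Finset.mul_sum, ← Finset.sum_add_distrib]
  exact Finset.sum_congr rfl fun q _ => by ring

theorem Sbar_pos_of_mem_IsetS (hσ : 0 < σ) {p q : Fin P} (hp : p ∈ IsetS A B S C q) :
    0 < Sbar A σ B S C p q := by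
  simp only [Sbar, Matrix.of_apply]
  split_ifs with hg
  · rcases hp with ⟨hpos, -⟩ | ⟨-, hneg⟩
    · exact hpos
    · exact absurd hg hneg.not_ge
  · exact lt_max_of_lt_right hσ

theorem denomS_nonneg (hσ : 0 < σ) (hB : ∀ m p, 0 ≤ B m p) (hS : ∀ p q, 0 ≤ S p q)
    (hC : ∀ q n, 0 ≤ C q n) (p q : Fin P) : 0 ≤ denomS A σ B S C p q := by
  have hSbar : ∀ p q, 0 ≤ Sbar A σ B S C p q := fun p q => by
    simp only [Sbar, Matrix.of_apply]
    split_ifs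
    exacts [hS p q, le_max_of_le_right hσ.le]
  have hmul : ∀ {a b c : ℕ} {X : Matrix (Fin a) (Fin b) ℝ} {Y : Matrix (Fin b) (Fin c) ℝ},
      (∀ i j, 0 ≤ X i j) → (∀ i j, 0 ≤ Y i j) → ∀ i j, 0 ≤ (X * Y) i j :=
    fun hX hY i j => by
      rw [Matrix.mul_apply]
      exact Finset.sum_nonneg fun k _ => mul_nonneg (hX i k) (hY k j)
  exact hmul (hmul (hmul (hmul (fun i j => hB j i) hB) hSbar) hC) (fun i j => hC j i) p q

theorem dS_pos_of_mem_IsetS (hσ : 0 < σ) (hδ : 0 < δ) (hB : ∀ m p, 0 ≤ B m p)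
    (hS : ∀ p q, 0 ≤ S p q) (hC : ∀ q n, 0 ≤ C q n) {p q : Fin P} (hp : p ∈ IsetS A B S C q) :
    0 < dS A σ B S C δ p q := by
  rw [dS, if_pos hp]
  exact div_pos (by linarith [denomS_nonneg (A := A) hσ hB hS hC p q])
    (Sbar_pos_of_mem_IsetS hσ hp)

theorem US_eq_of_not_mem_IsetS (hS : ∀ p q, 0 ≤ S p q) {p q : Fin P}
    (hp : p ∉ IsetS A B S C q) : US A σ B S C δ p q = S p q := by
  simp only [IsetS, Set.mem_ofPred_eq, not_or, not_and, not_lt] at hp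
  simp only [US, Sbar, Matrix.of_apply]
  rcases (hS p q).eq_or_lt with hzero | hpos
  · rw [if_pos (hp.2 hzero.symm), ← hzero, zero_mul, zero_div, sub_zero]
  · rw [not_not.mp (hp.1 hpos), mul_zero, zero_div, sub_zero]

theorem US_stationary (hσ : 0 < σ) (hδ : 0 < δ) (hB : ∀ m p, 0 ≤ B m p)
    (hS : ∀ p q, 0 ≤ S p q) (hC : ∀ q n, 0 ≤ C q n) {p q : Fin P} (hp : p ∈ IsetS A B S C q) :
    dS A σ B S C δ p q * (US A σ B S C δ p q - S p q) + gradS A B S C p q = 0 := by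
  have hSbar := Sbar_pos_of_mem_IsetS hσ hp
  have hden : 0 < denomS A σ B S C p q + δ := by
    linarith [denomS_nonneg (A := A) hσ hB hS hC p q]
  simp only [dS, if_pos hp, US, Matrix.of_apply]
  field_simp
  ring

end SUpdate

theorem stmt_11_general {M N P : ℕ} (A : Matrix (Fin M) (Fin N) ℝ)
    (α β σ : ℝ) (hσ : 0 < σ)
    (B : Matrix (Fin M) (Fin P) ℝ) (S : Matrix (Fin P) (Fin P) ℝ) (C : Matrix (Fin P) (Fin N) ℝ)
    (hB : ∀ m p, 0 ≤ B m p) (hS : ∀ p q, 0 ≤ S p q) (hC : ∀ q n, 0 ≤ C q n)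
    (δ : ℝ) (hδ : 0 < δ) :
    StrictConvexOn ℝ
        {S' : Matrix (Fin P) (Fin P) ℝ | ∀ p q, p ∉ IsetS A B S C q → S' p q = S p q}
        (fun S' => GS A α β σ B S C S' δ) ∧
    (∀ p q, p ∉ IsetS A B S C q → US A σ B S C δ p q = S p q) ∧
    (∀ S' : Matrix (Fin P) (Fin P) ℝ, (∀ p q, p ∉ IsetS A B S C q → S' p q = S p q) →
      S' ≠ US A σ B S C δ →
        GS A α β σ B S C (US A σ B S C δ) δ < GS A α β σ B S C S' δ) ∧
    (∀ S' : Matrix (Fin P) (Fin P) ℝ, (∀ p q, p ∉ IsetS A B S C q → S' p q = S p q) →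
      ((∀ p q, p ∈ IsetS A B S C q →
          dS A σ B S C δ p q * (S' p q - S p q) + gradS A B S C p q = 0) ↔
        S' = US A σ B S C δ)) := by
  have hd : ∀ p q, p ∈ IsetS A B S C q → 0 < dS A σ B S C δ p q :=
    fun _ _ hp => dS_pos_of_mem_IsetS hσ hδ hB hS hC hp
  have hU : US A σ B S C δ ∈ fixedOff (fun p q => p ∈ IsetS A B S C q) S :=
    fun _ _ hp => US_eq_of_not_mem_IsetS hS hp
  have hstat := fun p q (hp : p ∈ IsetS A B S C q) => US_stationary hσ hδ hB hS hC hp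
  refine ⟨?_, hU, fun S' hS' hne => ?_, fun S' hS' => stationary_iff_eq hd hS' hU hstat⟩
  · have hconv : StrictConvexOn ℝ (fixedOff (fun p q => p ∈ IsetS A B S C q) S)
        (fun X => GS A α β σ B S C X δ) := by
      simp only [GS_eq_quadModel_add_objJ]
      exact (strictConvexOn_quadModel hd).add_const _
    exact hconv
  · simpa only [GS_eq_quadModel_add_objJ, add_lt_add_iff_right] using
      quadModel_lt_of_stationary hd hS' hU hstat hne

theorem stmt_11 {M N P : ℕ} (A : Matrix (Fin M) (Fin N) ℝ) (hA : ∀ i j, 0 ≤ A i j)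
    (α β σ : ℝ) (hα : 0 < α) (hβ : 0 < β) (hσ : 0 < σ)
    (B : Matrix (Fin M) (Fin P) ℝ) (S : Matrix (Fin P) (Fin P) ℝ) (C : Matrix (Fin P) (Fin N) ℝ)
    (hB : ∀ m p, 0 ≤ B m p) (hS : ∀ p q, 0 ≤ S p q) (hC : ∀ q n, 0 ≤ C q n)
    (δ : ℝ) (hδ : 0 < δ)
    (hne : ∃ q, (IsetS A B S C q).Nonempty) :
    StrictConvexOn ℝ
        {S' : Matrix (Fin P) (Fin P) ℝ | ∀ p q, p ∉ IsetS A B S C q → S' p q = S p q}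
        (fun S' => GS A α β σ B S C S' δ) ∧
    (∀ p q, p ∉ IsetS A B S C q → US A σ B S C δ p q = S p q) ∧
    (∀ S' : Matrix (Fin P) (Fin P) ℝ, (∀ p q, p ∉ IsetS A B S C q → S' p q = S p q) →
      S' ≠ US A σ B S C δ →
        GS A α β σ B S C (US A σ B S C δ) δ < GS A α β σ B S C S' δ) ∧
    (∀ S' : Matrix (Fin P) (Fin P) ℝ, (∀ p q, p ∉ IsetS A B S C q → S' p q = S p q) →
      ((∀ p q, p ∈ IsetS A B S C q →
          dS A σ B S C δ p q * (S' p q - S p q) + gradS A B S C p q = 0) ↔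
        S' = US A σ B S C δ)) :=
  stmt_11_general A α β σ hσ B S C hB hS hC δ hδ
end
end

section
/- Let B, S, C be entrywise nonnegative and σ > 0, δ > 0. Then U_B(B; δ) = B if and only if B satisfies the B-part KKT conditions, i.e., for every (m,p): (∇_B J)_{mp} ≥ 0 and (∇_B J)_{mp}·b_{mp} = 0. -/
open Matrix Classical Filter

noncomputable section

lemma entry_mul_nonneg {a b c : ℕ} (X : Matrix (Fin a) (Fin b) ℝ) (Y : Matrix (Fin b) (Fin c) ℝ)
    (hX : ∀ i j, 0 ≤ X i j) (hY : ∀ i j, 0 ≤ Y i j) : ∀ i j, 0 ≤ (X * Y) i j := by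
  intro i j
  rw [Matrix.mul_apply]
  exact Finset.sum_nonneg fun k _ => mul_nonneg (hX i k) (hY k j)

theorem stmt_12 {M N P : ℕ} (A : Matrix (Fin M) (Fin N) ℝ) (hA : ∀ i j, 0 ≤ A i j)
    (α β σ : ℝ) (hα : 0 < α) (hβ : 0 < β) (hσ : 0 < σ)
    (B : Matrix (Fin M) (Fin P) ℝ) (S : Matrix (Fin P) (Fin P) ℝ) (C : Matrix (Fin P) (Fin N) ℝ)
    (hB : ∀ m p, 0 ≤ B m p) (hS : ∀ p q, 0 ≤ S p q) (hC : ∀ q n, 0 ≤ C q n)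
    (δ : ℝ) (hδ : 0 < δ) :
    UB A β σ B S C δ = B ↔
      ∀ m p, 0 ≤ gradB A β B S C m p ∧ gradB A β B S C m p * B m p = 0 := by
  have hBbar : ∀ m p, 0 ≤ Bbar A β σ B S C m p := by
    intro m p
    unfold Bbar
    simp only [Matrix.of_apply]
    split
    · exact hB m p
    · exact le_max_of_le_left (hB m p)
  have hCt : ∀ i j, 0 ≤ (Cᵀ : Matrix (Fin N) (Fin P) ℝ) i j := fun i j => hC j i
  have hSt : ∀ i j, 0 ≤ (Sᵀ : Matrix (Fin P) (Fin P) ℝ) i j := fun i j => hS j i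
  have hBbart : ∀ i j, 0 ≤ ((Bbar A β σ B S C)ᵀ) i j := fun i j => hBbar j i
  have hdenom : ∀ m p, 0 ≤ denomB A β σ B S C m p := by
    intro m p
    unfold denomB
    have h1 : ∀ i j, 0 ≤ (Bbar A β σ B S C * S * C * Cᵀ * Sᵀ) i j :=
      entry_mul_nonneg _ _ (entry_mul_nonneg _ _ (entry_mul_nonneg _ _
        (entry_mul_nonneg _ _ hBbar hS) hC) hCt) hSt
    have h2 : ∀ i j, 0 ≤ (Bbar A β σ B S C * (Bbar A β σ B S C)ᵀ * Bbar A β σ B S C) i j :=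
      entry_mul_nonneg _ _ (entry_mul_nonneg _ _ hBbar hBbart) hBbar
    simp only [Matrix.add_apply, Matrix.smul_apply, smul_eq_mul]
    exact add_nonneg (h1 m p) (mul_nonneg hβ.le (h2 m p))
  have hden_pos : ∀ m p, 0 < denomB A β σ B S C m p + δ := fun m p =>
    add_pos_of_nonneg_of_pos (hdenom m p) hδ
  constructor
  · intro h m p
    have heq : UB A β σ B S C δ m p = B m p := by rw [h]
    unfold UB at heq
    simp only [Matrix.of_apply] at heq
    have hzero : Bbar A β σ B S C m p * gradB A β B S C m p = 0 := by
      have := sub_eq_self.mp heq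
      rcases div_eq_zero_iff.mp this with h' | h'
      · exact h'
      · exact absurd h' (hden_pos m p).ne'
    by_cases hg : 0 ≤ gradB A β B S C m p
    · have hBb : Bbar A β σ B S C m p = B m p := by
        unfold Bbar; simp only [Matrix.of_apply, if_pos hg]
      rw [hBb] at hzero
      exact ⟨hg, by linarith [mul_comm (B m p) (gradB A β B S C m p), hzero]⟩
    · exfalso
      push_neg at hg
      have hBb : Bbar A β σ B S C m p = max (B m p) σ := by
        unfold Bbar; simp only [Matrix.of_apply, if_neg (not_le.mpr hg)]
      have hpos : 0 < Bbar A β σ B S C m p := by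
        rw [hBb]; exact lt_max_of_lt_right hσ
      have := mul_eq_zero.mp hzero
      rcases this with h' | h'
      · exact hpos.ne' h'
      · exact hg.ne h'
  · intro h
    ext m p
    unfold UB
    simp only [Matrix.of_apply]
    obtain ⟨hg, hprod⟩ := h m p
    have hBb : Bbar A β σ B S C m p = B m p := by
      unfold Bbar; simp only [Matrix.of_apply, if_pos hg]
    rw [hBb, mul_comm, hprod, zero_div, sub_zero]
end
end

section
/- Let M₀ ≥ 0 and let B, S, C be entrywise nonnegative matrices with J(B, S, C) ≤ M₀. Then every entry of B satisfies b_{mp}² ≤ 1 + √(2·M₀/β) and every entry of C satisfies c_{qn}² ≤ 1 + √(2·M₀/α); in particular the entries of B and C are bounded by a constant depending only on M₀, α and β. (Used in the proof of the paper's Theorem 32.) -/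
open Matrix Classical Filter

noncomputable section

lemma sq_entry_le_frobSq {m n : ℕ} (X : Matrix (Fin m) (Fin n) ℝ) (i : Fin m) (j : Fin n) :
    (X i j) ^ 2 ≤ frobSq X := by
  unfold frobSq
  calc (X i j) ^ 2 ≤ ∑ j', (X i j') ^ 2 := by
        apply Finset.single_le_sum (fun j' _ => sq_nonneg (X i j')) (Finset.mem_univ j)
    _ ≤ ∑ i', ∑ j', (X i' j') ^ 2 := by
        apply Finset.single_le_sum (f := fun i' => ∑ j', (X i' j') ^ 2)
          (fun i' _ => Finset.sum_nonneg fun j' _ => sq_nonneg _) (Finset.mem_univ i)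

lemma entry_le_sqrt {m n : ℕ} (X : Matrix (Fin m) (Fin n) ℝ) (t : ℝ)
    (ht : frobSq X ≤ t) (i : Fin m) (j : Fin n) : X i j ≤ Real.sqrt t := by
  have h1 : (X i j) ^ 2 ≤ t := le_trans (sq_entry_le_frobSq X i j) ht
  calc X i j ≤ |X i j| := le_abs_self _
    _ = Real.sqrt ((X i j) ^ 2) := (Real.sqrt_sq_eq_abs _).symm
    _ ≤ Real.sqrt t := Real.sqrt_le_sqrt h1

theorem stmt_15 {M N P : ℕ} (A : Matrix (Fin M) (Fin N) ℝ) (hA : ∀ i j, 0 ≤ A i j)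
    (α β : ℝ) (hα : 0 < α) (hβ : 0 < β)
    (B : Matrix (Fin M) (Fin P) ℝ) (S : Matrix (Fin P) (Fin P) ℝ) (C : Matrix (Fin P) (Fin N) ℝ)
    (hB : ∀ m p, 0 ≤ B m p) (hS : ∀ p q, 0 ≤ S p q) (hC : ∀ q n, 0 ≤ C q n)
    (M₀ : ℝ) (hM₀ : 0 ≤ M₀) (hJ : objJ A α β B S C ≤ M₀) :
    (∀ m p, (B m p) ^ 2 ≤ 1 + Real.sqrt (2 * M₀ / β)) ∧
    (∀ q n, (C q n) ^ 2 ≤ 1 + Real.sqrt (2 * M₀ / α)) := by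
  have hf1 : 0 ≤ frobSq (A - B * S * C) := frobSq_nonneg _
  have hf2 : 0 ≤ frobSq (C * Cᵀ - 1) := frobSq_nonneg _
  have hf3 : 0 ≤ frobSq (Bᵀ * B - 1) := frobSq_nonneg _
  unfold objJ at hJ
  have hBbound : frobSq (Bᵀ * B - 1) ≤ 2 * M₀ / β := by
    rw [le_div_iff₀ hβ]
    nlinarith [mul_nonneg (le_of_lt hα) hf2]
  have hCbound : frobSq (C * Cᵀ - 1) ≤ 2 * M₀ / α := by
    rw [le_div_iff₀ hα]
    nlinarith [mul_nonneg (le_of_lt hβ) hf3]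
  constructor
  · intro m p
    have h1 : ((Bᵀ * B - 1 : Matrix (Fin P) (Fin P) ℝ)) p p ≤ Real.sqrt (2 * M₀ / β) :=
      entry_le_sqrt _ _ hBbound p p
    have h2 : ((Bᵀ * B - 1 : Matrix (Fin P) (Fin P) ℝ)) p p = (∑ x, B x p * B x p) - 1 := by
      simp [Matrix.sub_apply, Matrix.mul_apply, Matrix.one_apply]
    have h3 : (B m p) ^ 2 ≤ ∑ x, B x p * B x p := by
      rw [sq]
      exact Finset.single_le_sum (f := fun x => B x p * B x p)
        (fun x _ => mul_nonneg (hB x p) (hB x p)) (Finset.mem_univ m)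
    rw [h2] at h1; linarith
  · intro q n
    have h1 : ((C * Cᵀ - 1 : Matrix (Fin P) (Fin P) ℝ)) q q ≤ Real.sqrt (2 * M₀ / α) :=
      entry_le_sqrt _ _ hCbound q q
    have h2 : ((C * Cᵀ - 1 : Matrix (Fin P) (Fin P) ℝ)) q q = (∑ x, C q x * C q x) - 1 := by
      simp [Matrix.sub_apply, Matrix.mul_apply, Matrix.one_apply]
    have h3 : (C q n) ^ 2 ≤ ∑ x, C q x * C q x := by
      rw [sq]
      exact Finset.single_le_sum (f := fun x => C q x * C q x)
        (fun x _ => mul_nonneg (hC q x) (hC q x)) (Finset.mem_univ n)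
    rw [h2] at h1; linarith
end
end
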